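/- arXiv:1503.05754 — 5 statements merged into one kernel-verified Lean document; each statement's English description precedes it below -/
import Mathlib

section
/- Let s, t ≥ 0 and let X₂, X₃, X₄ be i.i.d. random variables with the standard exponential distribution. Then (1/4)[P(max(X₂,X₃,X₄) < t) − P(s + med(X₂,X₃,X₄) < t)] + (3/4)[P(max(s,X₃,X₄) < t) − P(X₂ + med(s,X₃,X₄) < t)] = ξ(s,t), where ξ(s,t) = (1/4)·1{s<t}·e^{−s−3t}·(−e^s − 2e^{4s} + 6e^{2t} + 3e^{s+t} + 3e^{3s+t} − e^{s+2t}(9 − 6s)) + (1/4)·1{s≥t}·e^{−3t}·(−1 + 6e^t − 2e^{3t} − e^{2t}(3 − 6t)). -/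
open Real MeasureTheory Set ProbabilityTheory

/-- The median (middle value) of three reals. -/
noncomputable def med (a b c : ℝ) : ℝ := a + b + c - max a (max b c) - min a (min b c)

/-- The projection `ξ(s,t)` from the paper. -/
noncomputable def xiK (s t : ℝ) : ℝ :=
  (if s < t then
    (1/4) * exp (-s - 3*t) *
      (-exp s - 2 * exp (4*s) + 6 * exp (2*t) + 3 * exp (s+t) + 3 * exp (3*s+t)
        - exp (s + 2*t) * (9 - 6*s))
  else 0)
  + (if t ≤ s then
      (1/4) * exp (-(3*t)) *
        (-1 + 6 * exp t - 2 * exp (3*t) - exp (2*t) * (3 - 6*t))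
    else 0)

/-! Write `G(u) = P(X < u)`, which is `1 - e^{-u}` for `u ≥ 0`. Three of the four probabilities
are Boolean combinations of the independent events `{Xᵢ < u}`: the maximum is below `u` iff all
variables are, the median of three numbers is below `u` iff at least two of them are (so
`P(med < u) = 3G² - 2G³` by inclusion–exclusion), and `med(s, X₃, X₄) < u` iff one of `X₃, X₄`
is below `u` (when `s < u`) or both are. The remaining term `P(X₂ + med(s, X₃, X₄) < t)` is
obtained by conditioning on `X₂`: it is the integral over `[0, t]` of `e^{-x}` times the
distribution function of `med(s, X₃, X₄)` at `t - x`, an exponential polynomial on each side of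
`x = t - s`. -/

lemma med_lt_iff (a b c u : ℝ) :
    med a b c < u ↔ a < u ∧ b < u ∨ a < u ∧ c < u ∨ b < u ∧ c < u := by
  grind [med]

lemma measureReal_majority {α : Type*} [MeasurableSpace α] (μ : Measure α) [IsFiniteMeasure μ]
    {A B C : Set α} (hA : MeasurableSet A) (hB : MeasurableSet B) (hC : MeasurableSet C) :
    μ.real (A ∩ B ∪ A ∩ C ∪ B ∩ C)
      = μ.real (A ∩ B) + μ.real (A ∩ C) + μ.real (B ∩ C) - 2 * μ.real (A ∩ B ∩ C) := by
  have h₁ := measureReal_union_add_inter (μ := μ) (s := A ∩ B) (hA.inter hC)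
  have h₂ := measureReal_union_add_inter (μ := μ) (s := A ∩ B ∪ A ∩ C) (hB.inter hC)
  have e₁ : A ∩ B ∩ (A ∩ C) = A ∩ B ∩ C := by ext; simp only [mem_inter_iff]; tauto
  have e₂ : (A ∩ B ∪ A ∩ C) ∩ (B ∩ C) = A ∩ B ∩ C := by
    ext; simp only [mem_inter_iff, mem_union]; tauto
  rw [e₁] at h₁
  rw [e₂] at h₂
  linarith

lemma Real.exp_ofNat_mul (n : ℕ) [n.AtLeastTwo] (x : ℝ) :
    exp (ofNat(n) * x) = exp x ^ ofNat(n) := by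
  rw [← Real.exp_nat_mul, Nat.cast_ofNat]

lemma integral_exp_neg_add_exp (α β γ a b : ℝ) :
    ∫ x in a..b, (α * exp (-x) + β + γ * exp x)
      = α * (exp (-a) - exp (-b)) + β * (b - a) + γ * (exp b - exp a) := by
  have hF (x : ℝ) : HasDerivAt (fun x => -α * exp (-x) + β * x + γ * exp x)
      (α * exp (-x) + β + γ * exp x) x := by
    refine ((((hasDerivAt_neg x).exp.const_mul (-α)).add ((hasDerivAt_id' x).const_mul β)).add
      ((hasDerivAt_exp x).const_mul γ)).congr_deriv ?_
    ring
  rw [intervalIntegral.integral_eq_sub_of_hasDerivAt (fun x _ => hF x)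
    ((by fun_prop : Continuous _).intervalIntegrable _ _)]
  ring

-- The bracket is `P(med(s, X₃, X₄) < t - x)` for standard exponential `X₃, X₄` and `x ≤ t`.
lemma integral_exp_neg_mul_cdf_med_const {s t : ℝ} (hs : 0 ≤ s) (ht : 0 ≤ t) :
    ∫ x in 0..t, exp (-x) * (if s < t - x then 1 - exp (-(t - x)) ^ 2 else (1 - exp (-(t - x))) ^ 2)
      = if s < t then 1 + exp (-(2 * t)) - 2 * exp (-(s + t)) - 2 * s * exp (-t)
        else 1 - 2 * t * exp (-t) - exp (-(2 * t)) := by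
  set f : ℝ → ℝ := fun x =>
    exp (-x) * (if s < t - x then 1 - exp (-(t - x)) ^ 2 else (1 - exp (-(t - x))) ^ 2)
  have hprod₁ (x : ℝ) : exp (-x) * exp (-(t - x)) = exp (-t) := by rw [← exp_add]; ring_nf
  have hprod₂ (x : ℝ) : exp (-x) * exp (-(t - x)) ^ 2 = exp (-(2 * t)) * exp x := by
    rw [sq, ← mul_assoc, hprod₁, ← exp_add, ← exp_add]; ring_nf
  have hfar {x : ℝ} (h : s < t - x) : f x = 1 * exp (-x) + 0 + -exp (-(2 * t)) * exp x := by
    simp only [f, if_pos h]; linear_combination -hprod₂ x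
  have hnear {x : ℝ} (h : ¬ s < t - x) :
      f x = 1 * exp (-x) + -2 * exp (-t) + exp (-(2 * t)) * exp x := by
    simp only [f, if_neg h]; linear_combination -2 * hprod₁ x + hprod₂ x
  split_ifs with hst
  · have hsplit₀ : 0 ≤ t - s := by linarith
    have hsplit₁ : t - s ≤ t := by linarith
    have hEq₁ : EqOn f (fun x => 1 * exp (-x) + 0 + -exp (-(2 * t)) * exp x) (Ioo 0 (t - s)) :=
      fun x hx => hfar (by linarith [hx.2])
    have hEq₂ : EqOn f (fun x => 1 * exp (-x) + -2 * exp (-t) + exp (-(2 * t)) * exp x)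
        (Ioo (t - s) t) :=
      fun x hx => hnear (by linarith [hx.1])
    have hint {a b : ℝ} (hab : a ≤ b) {g : ℝ → ℝ} (hg : Continuous g) (h : EqOn f g (Ioo a b)) :
        IntervalIntegrable f volume a b :=
      (intervalIntegrable_congr_uIoo (uIoo_of_le hab ▸ h)).mpr (hg.intervalIntegrable a b)
    rw [← intervalIntegral.integral_add_adjacent_intervals (hint hsplit₀ (by fun_prop) hEq₁)
        (hint hsplit₁ (by fun_prop) hEq₂),
      intervalIntegral.integral_congr_Ioo_of_le hsplit₀ hEq₁,
      intervalIntegral.integral_congr_Ioo_of_le hsplit₁ hEq₂,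
      integral_exp_neg_add_exp, integral_exp_neg_add_exp]
    simp only [Real.exp_neg, Real.exp_add, Real.exp_sub, Real.exp_ofNat_mul, exp_zero]
    field_simp
    ring
  · rw [intervalIntegral.integral_congr_Ioo_of_le ht fun x hx => hnear (by linarith [hx.1]),
      integral_exp_neg_add_exp]
    simp only [Real.exp_neg, Real.exp_ofNat_mul, exp_zero]
    field_simp
    ring

namespace ProbabilityTheory

lemma expMeasure_one_real_Iio (u : ℝ) :
    (expMeasure 1).real (Iio u) = if 0 ≤ u then 1 - exp (-u) else 0 := by
  rw [measureReal_def, expMeasure, gammaMeasure, withDensity_apply _ measurableSet_Iio,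
    setLIntegral_congr Iio_ae_eq_Iic, show gammaPDF 1 1 = exponentialPDF 1 from rfl,
    lintegral_exponentialPDF_eq_antiDeriv one_pos u, ENNReal.toReal_ofReal]
  · simp
  · split_ifs with hu
    · simpa using hu
    · rfl

lemma integral_expMeasure_one_of_eq_zero {g : ℝ → ℝ} {t : ℝ} (ht : 0 ≤ t)
    (hg : ∀ x, t < x → g x = 0) :
    ∫ x, g x ∂(expMeasure 1) = ∫ x in 0..t, exp (-x) * g x := by
  have hpdf (x : ℝ) : (gammaPDF 1 1 x).toReal = if 0 ≤ x then exp (-x) else 0 := by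
    rw [gammaPDF_eq, ENNReal.toReal_ofReal (by split_ifs <;> positivity)]
    simp
  have hmeas : Measurable (gammaPDF 1 1) := (measurable_gammaPDFReal 1 1).ennreal_ofReal
  rw [expMeasure, gammaMeasure, integral_withDensity_eq_integral_toReal_smul hmeas
      (Filter.Eventually.of_forall fun _ => ENNReal.ofReal_lt_top),
    intervalIntegral.integral_of_le ht, ← integral_Icc_eq_integral_Ioc,
    ← setIntegral_eq_integral_of_forall_compl_eq_zero]
  · refine setIntegral_congr_fun measurableSet_Icc fun x hx => ?_
    simp [hpdf, hx.1]
  · intro x hx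
    rcases not_and_or.mp hx with hx | hx
    · simp [hpdf, not_le.mp hx]
    · simp [hg x (not_le.mp hx)]

variable {Ω ι : Type*} [MeasurableSpace Ω] {P : Measure Ω} {μ : Measure ℝ}

lemma measureReal_lt_of_map_eq {Y : Ω → ℝ} (hY : Measurable Y) (hlaw : P.map Y = μ) (u : ℝ) :
    P.real {ω | Y ω < u} = μ.real (Iio u) := by
  rw [← hlaw, map_measureReal_apply hY measurableSet_Iio]
  rfl

lemma IndepFun.measureReal_add_lt [IsFiniteMeasure P] {Y Z : Ω → ℝ} (hY : Measurable Y)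
    (hZ : Measurable Z) (hind : IndepFun Y Z P) (t : ℝ) :
    P.real {ω | Y ω + Z ω < t} = ∫ y, P.real {ω | Z ω < t - y} ∂(P.map Y) := by
  have hS : MeasurableSet {p : ℝ × ℝ | p.1 + p.2 < t} := by measurability
  have hslice (y : ℝ) : Prod.mk y ⁻¹' {p : ℝ × ℝ | p.1 + p.2 < t} = Iio (t - y) := by
    ext; simp [lt_sub_iff_add_lt']
  calc P.real {ω | Y ω + Z ω < t}
      = (P.map fun ω => (Y ω, Z ω)).real {p | p.1 + p.2 < t} := by
        rw [map_measureReal_apply (hY.prodMk hZ) hS]; rfl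
    _ = ((P.map Y).prod (P.map Z)).real {p | p.1 + p.2 < t} := by
        rw [(indepFun_iff_map_prod_eq_prod_map_map hY.aemeasurable hZ.aemeasurable).mp hind]
    _ = ∫ y, (P.map Z).real (Iio (t - y)) ∂(P.map Y) := by
        rw [measureReal_def, Measure.prod_apply hS, ← integral_toReal]
        · simp only [hslice, measureReal_def]
        · exact (measurable_measure_prodMk_left hS).aemeasurable
        · exact Filter.Eventually.of_forall fun _ => measure_lt_top _ _
    _ = ∫ y, P.real {ω | Z ω < t - y} ∂(P.map Y) := by
        simp only [measureReal_lt_of_map_eq hZ rfl]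

section IdenticallyDistributed

variable {X : ι → Ω → ℝ}

lemma iIndepFun.measureReal_inter_lt (hX : ∀ i, Measurable (X i)) (hind : iIndepFun X P)
    (hlaw : ∀ i, P.map (X i) = μ) {i j : ι} (hij : i ≠ j) (u v : ℝ) :
    P.real ({ω | X i ω < u} ∩ {ω | X j ω < v}) = μ.real (Iio u) * μ.real (Iio v) := by
  have h := (hind.indepFun hij).measure_inter_preimage_eq_mul _ _ (measurableSet_Iio (a := u))
    (measurableSet_Iio (a := v))
  rw [← measureReal_lt_of_map_eq (hX i) (hlaw i), ← measureReal_lt_of_map_eq (hX j) (hlaw j)]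
  simp only [measureReal_def]
  rw [← ENNReal.toReal_mul]
  exact congrArg ENNReal.toReal h

lemma iIndepFun.measureReal_forall_lt [Fintype ι] (hX : ∀ i, Measurable (X i))
    (hind : iIndepFun X P) (hlaw : ∀ i, P.map (X i) = μ) (u : ℝ) :
    P.real {ω | ∀ i, X i ω < u} = μ.real (Iio u) ^ Fintype.card ι := by
  have h := hind.meas_iInter (s := fun i => X i ⁻¹' Iio u)
    fun i => ⟨Iio u, measurableSet_Iio, rfl⟩
  rw [show {ω | ∀ i, X i ω < u} = ⋂ i, X i ⁻¹' Iio u by ext; simp, measureReal_def, h,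
    ENNReal.toReal_prod]
  simp only [← measureReal_def]
  exact (Finset.prod_congr rfl fun i _ => measureReal_lt_of_map_eq (hX i) (hlaw i) u).trans
    (by simp)

lemma iIndepFun.measureReal_med_const_lt [IsFiniteMeasure P] (hX : ∀ i, Measurable (X i))
    (hind : iIndepFun X P) (hlaw : ∀ i, P.map (X i) = μ) {i j : ι} (hij : i ≠ j) (s u : ℝ) :
    P.real {ω | med s (X i ω) (X j ω) < u}
      = if s < u then 2 * μ.real (Iio u) - μ.real (Iio u) ^ 2 else μ.real (Iio u) ^ 2 := by
  have hinter := hind.measureReal_inter_lt hX hlaw hij u u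
  split_ifs with hsu
  · have hunion := measureReal_union_add_inter (μ := P) (s := {ω | X i ω < u})
      (t := {ω | X j ω < u}) (measurableSet_lt (hX j) measurable_const)
    rw [show {ω | med s (X i ω) (X j ω) < u} = {ω | X i ω < u} ∪ {ω | X j ω < u} by
      ext; simp [med_lt_iff, hsu]; tauto]
    rw [hinter, measureReal_lt_of_map_eq (hX i) (hlaw i),
      measureReal_lt_of_map_eq (hX j) (hlaw j)] at hunion
    linarith
  · rw [show {ω | med s (X i ω) (X j ω) < u} = {ω | X i ω < u} ∩ {ω | X j ω < u} by
      ext; simp [med_lt_iff, hsu], hinter, sq]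

end IdenticallyDistributed

section ThreeVariables

variable {X : Fin 3 → Ω → ℝ}

lemma iIndepFun.measureReal_med_lt [IsFiniteMeasure P] (hX : ∀ i, Measurable (X i))
    (hind : iIndepFun X P) (hlaw : ∀ i, P.map (X i) = μ) (u : ℝ) :
    P.real {ω | med (X 0 ω) (X 1 ω) (X 2 ω) < u}
      = 3 * μ.real (Iio u) ^ 2 - 2 * μ.real (Iio u) ^ 3 := by
  have hA (i : Fin 3) : MeasurableSet {ω | X i ω < u} := measurableSet_lt (hX i) measurable_const
  have hpair {i j : Fin 3} (hij : i ≠ j) := hind.measureReal_inter_lt hX hlaw hij u u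
  have htriple : {ω | X 0 ω < u} ∩ {ω | X 1 ω < u} ∩ {ω | X 2 ω < u} = {ω | ∀ i, X i ω < u} := by
    ext; simp [Fin.forall_fin_succ, and_assoc]
  rw [show {ω | med (X 0 ω) (X 1 ω) (X 2 ω) < u}
      = {ω | X 0 ω < u} ∩ {ω | X 1 ω < u} ∪ {ω | X 0 ω < u} ∩ {ω | X 2 ω < u}
        ∪ {ω | X 1 ω < u} ∩ {ω | X 2 ω < u} by ext; simp [med_lt_iff, or_assoc],
    measureReal_majority P (hA 0) (hA 1) (hA 2), htriple, hind.measureReal_forall_lt hX hlaw,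
    hpair (by decide), hpair (by decide), hpair (by decide), Fintype.card_fin]
  ring

lemma iIndepFun.measureReal_add_med_const_lt_of_expMeasure [IsFiniteMeasure P]
    (hX : ∀ i, Measurable (X i)) (hind : iIndepFun X P) (hlaw : ∀ i, P.map (X i) = expMeasure 1)
    {s t : ℝ} (hs : 0 ≤ s) (ht : 0 ≤ t) :
    P.real {ω | X 0 ω + med s (X 1 ω) (X 2 ω) < t}
      = if s < t then 1 + exp (-(2 * t)) - 2 * exp (-(s + t)) - 2 * s * exp (-t)
        else 1 - 2 * t * exp (-t) - exp (-(2 * t)) := by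
  have hmed : Measurable fun p : ℝ × ℝ => med s p.1 p.2 := by unfold med; fun_prop
  have hY : Measurable fun ω => med s (X 1 ω) (X 2 ω) := hmed.comp ((hX 1).prodMk (hX 2))
  have hindep : IndepFun (X 0) (fun ω => med s (X 1 ω) (X 2 ω)) P :=
    ((hind.indepFun_prodMk hX 1 2 0 (by decide) (by decide)).comp hmed measurable_id).symm
  have hcdf (u : ℝ) := hind.measureReal_med_const_lt hX hlaw (by decide : (1 : Fin 3) ≠ 2) s u
  rw [hindep.measureReal_add_lt (hX 0) hY, hlaw 0, integral_expMeasure_one_of_eq_zero ht,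
    ← integral_exp_neg_mul_cdf_med_const hs ht]
  · refine intervalIntegral.integral_congr_Ioo_of_le ht fun x hx => ?_
    simp only [hcdf, expMeasure_one_real_Iio, if_pos (sub_nonneg.2 hx.2.le)]
    split_ifs <;> ring
  · intro x hx
    simp only [hcdf, expMeasure_one_real_Iio, if_neg (by linarith : ¬ s < t - x),
      if_neg (by linarith : ¬ 0 ≤ t - x)]
    ring

end ThreeVariables

end ProbabilityTheory

lemma xiK_of_lt {s t : ℝ} (h : s < t) :
    xiK s t = 1/4 * ((1 - exp (-t)) ^ 3
        - (3 * (1 - exp (-(t - s))) ^ 2 - 2 * (1 - exp (-(t - s))) ^ 3))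
      + 3/4 * ((1 - exp (-t)) ^ 2
        - (1 + exp (-(2 * t)) - 2 * exp (-(s + t)) - 2 * s * exp (-t))) := by
  rw [xiK, if_pos h, if_neg h.not_ge]
  simp only [Real.exp_add, Real.exp_sub, Real.exp_neg, Real.exp_ofNat_mul]
  field_simp
  ring

lemma xiK_of_le {s t : ℝ} (h : t ≤ s) :
    xiK s t = 1/4 * (1 - exp (-t)) ^ 3 + 3/4 * (0 - (1 - 2 * t * exp (-t) - exp (-(2 * t)))) := by
  rw [xiK, if_neg h.not_gt, if_pos h]
  simp only [Real.exp_neg, Real.exp_ofNat_mul]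
  field_simp
  ring

/-- Here `X 0, X 1, X 2` play the roles of `X₂, X₃, X₄`. -/
theorem stmt_6 {Ω : Type*} [MeasurableSpace Ω] (P : Measure Ω) [IsProbabilityMeasure P]
    (X : Fin 3 → Ω → ℝ) (hXmeas : ∀ i, Measurable (X i))
    (hindep : iIndepFun X P)
    (hlaw : ∀ i, Measure.map (X i) P = expMeasure 1)
    (s t : ℝ) (hs : 0 ≤ s) (ht : 0 ≤ t) :
    (1/4) * ((P {ω | max (X 0 ω) (max (X 1 ω) (X 2 ω)) < t}).toReal
      - (P {ω | s + med (X 0 ω) (X 1 ω) (X 2 ω) < t}).toReal)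
    + (3/4) * ((P {ω | max s (max (X 1 ω) (X 2 ω)) < t}).toReal
      - (P {ω | X 0 ω + med s (X 1 ω) (X 2 ω) < t}).toReal)
    = xiK s t := by
  simp only [← measureReal_def]
  rw [show {ω | max (X 0 ω) (max (X 1 ω) (X 2 ω)) < t} = {ω | ∀ i, X i ω < t} by
      ext; simp [Fin.forall_fin_succ],
    show {ω | s + med (X 0 ω) (X 1 ω) (X 2 ω) < t} = {ω | med (X 0 ω) (X 1 ω) (X 2 ω) < t - s} by
      ext; simp [lt_sub_iff_add_lt'],
    hindep.measureReal_forall_lt hXmeas hlaw, hindep.measureReal_med_lt hXmeas hlaw,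
    hindep.measureReal_add_med_const_lt_of_expMeasure hXmeas hlaw hs ht,
    expMeasure_one_real_Iio, expMeasure_one_real_Iio, if_pos ht, Fintype.card_fin]
  rcases lt_or_ge s t with hst | hts
  · rw [show {ω | max s (max (X 1 ω) (X 2 ω)) < t} = {ω | X 1 ω < t} ∩ {ω | X 2 ω < t} by
        ext; simp [hst],
      hindep.measureReal_inter_lt hXmeas hlaw (by decide), expMeasure_one_real_Iio, if_pos ht,
      if_pos hst, if_pos (sub_nonneg.2 hst.le), xiK_of_lt hst]
    ring
  · rw [show {ω | max s (max (X 1 ω) (X 2 ω)) < t} = ∅ from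
        eq_empty_of_forall_notMem fun _ h => hts.not_gt ((le_max_left _ _).trans_lt h),
      measureReal_empty, if_neg hts.not_gt, xiK_of_le hts]
    split_ifs with hts'
    · simp [show t - s = 0 by linarith]
    · ring
end

section
/- Let h : [0,∞) → ℝ be a bounded continuous function with ∫₀^∞ h(x) dx = 0, and set H(y) = ∫₀^y h(s) ds. For θ in a neighborhood of 0 define g(x,θ) = e^{−x} + θ·h(x), G(y,θ) = 1 − e^{−y} + θ·H(y), and for t > 0 define a(t,θ) = G(t,θ)³ − 6∫₀^t g(x,θ)·(∫₀^{t−x} G(y,θ)·(1 − G(y,θ))·g(y,θ) dy) dx. Then for each t > 0 the map θ ↦ a(t,θ) is differentiable at θ = 0 with derivative ∂a/∂θ(t,0) = 4·∫₀^∞ h(x)·ξ(x,t) dx. -/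
/-!
Since `g(·,θ)` is the derivative of `G(·,θ)` and `G(0,θ) = 0`, the inner integral equals
`F(G(t-x,θ))` with `F(z) = z²/2 - z³/3`. Hence `a(t,θ)` is a polynomial of degree four in `θ`,
and its derivative at `θ = 0` is the linear coefficient
`3 G₀(t)² H(t) - 6 ∫₀ᵗ [h(x) F(G₀(t-x)) + e^{-x} G₀(t-x) (1 - G₀(t-x)) H(t-x)] dx`,
where `G₀(y) = 1 - e^{-y}`. The substitution `v = t - x` and an integration by parts turn this
into `∫₀ᵗ h(s) K(t,s) ds` for an explicit kernel `K`. On the other side, `ξ(·,t)` is constant on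
`[t, ∞)` and `∫₀^∞ h = 0`, so `4 ∫₀^∞ h ξ(·,t) = ∫₀ᵗ h(s) · 4 (ξ(s,t) - ξ(t,t)) ds`, and
`4 (ξ(s,t) - ξ(t,t)) = K(t,s)` for `s < t` is an identity between exponentials.
-/

open Real MeasureTheory Set

open intervalIntegral
open scoped Interval

theorem hasDerivAt_integral_of_continuousOn_Icc {h : ℝ → ℝ} {a b x : ℝ}
    (hh : ContinuousOn h (Icc a b)) (hx : x ∈ Ioo a b) :
    HasDerivAt (fun y => ∫ s in a..y, h s) (h x) x :=
  integral_hasDerivAt_right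
    ((hh.mono (Icc_subset_Icc_right hx.2.le)).intervalIntegrable_of_Icc hx.1.le)
    ((hh.mono Ioo_subset_Icc_self).stronglyMeasurableAtFilter isOpen_Ioo x hx)
    (hh.continuousAt (Icc_mem_nhds hx.1 hx.2))

theorem continuousOn_integral_of_continuousOn_Icc {h : ℝ → ℝ} {a b : ℝ} (hab : a ≤ b)
    (hh : ContinuousOn h (Icc a b)) : ContinuousOn (fun y => ∫ s in a..y, h s) (Icc a b) := by
  simpa [uIcc_of_le hab] using
    continuousOn_primitive_interval' (hh.intervalIntegrable_of_Icc hab) left_mem_uIcc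

theorem ContinuousOn.comp_const_sub_Icc {f : ℝ → ℝ} {t : ℝ}
    (hf : ContinuousOn f (Icc 0 t)) :
    ContinuousOn (fun x => f (t - x)) (Icc 0 t) :=
  hf.comp (by fun_prop) fun x hx => ⟨by linarith [hx.2], by linarith [hx.1]⟩

theorem integral_mul_one_sub_mul_deriv {G g : ℝ → ℝ} {a b u : ℝ}
    (hG : ContinuousOn G (Icc a b)) (hGg : ∀ x ∈ Ioo a b, HasDerivAt G (g x) x)
    (hg : ContinuousOn g (Icc a b)) (hu : u ∈ Icc a b) :
    ∫ x in a..u, G x * (1 - G x) * g x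
      = (G u ^ 2 / 2 - G u ^ 3 / 3) - (G a ^ 2 / 2 - G a ^ 3 / 3) := by
  have hsub : [[a, u]] ⊆ Icc a b := by rw [uIcc_of_le hu.1]; exact Icc_subset_Icc_right hu.2
  have hGg' : ∀ x ∈ Ioo (min a u) (max a u), HasDerivWithinAt G (g x) (Ioi x) x := by
    rw [min_eq_left hu.1, max_eq_right hu.1]
    exact fun x hx => (hGg x ⟨hx.1, hx.2.trans_le hu.2⟩).hasDerivWithinAt
  have hsubst := integral_comp_mul_deriv'' (g := fun z => z * (1 - z))
    (hG.mono hsub) hGg' (hg.mono hsub) (by fun_prop)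
  simp only [Function.comp_apply] at hsubst
  simp_rw [hsubst, mul_one_sub, ← sq]
  rw [integral_sub intervalIntegrable_id (intervalIntegrable_pow 2), integral_id, integral_pow]
  ring

theorem integral_deriv_mul_primitive {h u u' : ℝ → ℝ} {a b : ℝ} (hab : a ≤ b)
    (hh : ContinuousOn h (Icc a b)) (hu : ∀ x, HasDerivAt u (u' x) x) (hu' : Continuous u') :
    ∫ x in a..b, u' x * ∫ s in a..x, h s = ∫ x in a..b, h x * (u b - u x) := by
  have hhi : IntervalIntegrable h volume a b := hh.intervalIntegrable_of_Icc hab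
  have hP : ContinuousOn (fun x => ∫ s in a..x, h s) [[a, b]] := by
    rw [uIcc_of_le hab]; exact continuousOn_integral_of_continuousOn_Icc hab hh
  have hu_cont : ContinuousOn u [[a, b]] := fun x _ => (hu x).continuousAt.continuousWithinAt
  simp_rw [mul_comm (u' _), mul_sub]
  rw [integral_mul_deriv_eq_deriv_mul_of_hasDerivAt hP hu_cont
      (fun x hx => hasDerivAt_integral_of_continuousOn_Icc hh (by simpa [hab] using hx))
      (fun x _ => hu x) hhi (hu'.intervalIntegrable a b),
    integral_sub (hhi.mul_const _) (hhi.mul_continuousOn hu_cont),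
    intervalIntegral.integral_mul_const, integral_same]
  ring

theorem hasDerivAt_integral_sum_pow_mul {a b : ℝ} {n : ℕ} (q : Fin n → ℝ → ℝ)
    (hq : ∀ k, IntervalIntegrable (q k) volume a b) (θ₀ : ℝ) :
    HasDerivAt (fun θ => ∫ x in a..b, ∑ k : Fin n, θ ^ (k : ℕ) * q k x)
      (∑ k : Fin n, (k : ℕ) * θ₀ ^ ((k : ℕ) - 1) * ∫ x in a..b, q k x) θ₀ := by
  have hlin (θ : ℝ) : ∫ x in a..b, ∑ k : Fin n, θ ^ (k : ℕ) * q k x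
      = ∑ k : Fin n, θ ^ (k : ℕ) * ∫ x in a..b, q k x := by
    rw [integral_finsetSum fun k _ => (hq k).const_mul _]
    simp only [intervalIntegral.integral_const_mul]
  simp only [hlin]
  exact HasDerivAt.fun_sum fun k _ => (hasDerivAt_pow (k : ℕ) θ₀).mul_const _

theorem hasDerivAt_integral_affine_mul_cubic {a b : ℝ} {p q A B : ℝ → ℝ}
    (hp : ContinuousOn p [[a, b]]) (hq : ContinuousOn q [[a, b]])
    (hA : ContinuousOn A [[a, b]]) (hB : ContinuousOn B [[a, b]]) :
    HasDerivAt (fun θ => ∫ x in a..b, (p x + θ * q x) *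
        ((A x + θ * B x) ^ 2 / 2 - (A x + θ * B x) ^ 3 / 3))
      (∫ x in a..b, q x * (A x ^ 2 / 2 - A x ^ 3 / 3) + p x * (A x * (1 - A x)) * B x) 0 := by
  let c : Fin 5 → ℝ → ℝ := ![
    fun x => p x * (A x ^ 2 / 2 - A x ^ 3 / 3),
    fun x => q x * (A x ^ 2 / 2 - A x ^ 3 / 3) + p x * (A x * (1 - A x)) * B x,
    fun x => q x * (A x * (1 - A x)) * B x + p x * (1 / 2 - A x) * B x ^ 2,
    fun x => q x * (1 / 2 - A x) * B x ^ 2 - p x * B x ^ 3 / 3,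
    fun x => -(q x * B x ^ 3 / 3)]
  have hc : ∀ k, IntervalIntegrable (c k) volume a b := by
    intro k
    refine ContinuousOn.intervalIntegrable ?_
    fin_cases k <;>
      simp only [c, Fin.zero_eta, Fin.mk_one, Fin.reduceFinMk, Matrix.cons_val_zero,
        Matrix.cons_val_one, Matrix.cons_val] <;> fun_prop
  have hexpand : (fun θ => ∫ x in a..b, (p x + θ * q x) *
        ((A x + θ * B x) ^ 2 / 2 - (A x + θ * B x) ^ 3 / 3))
      = fun θ => ∫ x in a..b, ∑ k : Fin 5, θ ^ (k : ℕ) * c k x := by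
    funext θ
    congr 1
    funext x
    simp only [c, Fin.sum_univ_five, Fin.isValue, Fin.coe_ofNat_eq_mod, Nat.reduceMod,
      Matrix.cons_val]
    ring
  rw [hexpand]
  convert hasDerivAt_integral_sum_pow_mul c hc 0 using 1
  simp [Fin.sum_univ_five, c]

theorem setIntegral_Ioi_mul_eq_setIntegral_Ioo_sub {f k : ℝ → ℝ} {a b c : ℝ}
    (hf : IntegrableOn f (Ioi a)) (hf0 : ∫ x in Ioi a, f x = 0)
    (hk : IntegrableOn (fun x => f x * (k x - c)) (Ioo a b)) (hkc : ∀ x, b ≤ x → k x = c) :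
    ∫ x in Ioi a, f x * k x = ∫ x in Ioo a b, f x * (k x - c) := by
  have hvanish : ∀ x ∈ Ioi a \ Ioo a b, f x * (k x - c) = 0 := fun x hx => by
    rw [hkc x (le_of_not_gt fun hxb => hx.2 ⟨hx.1, hxb⟩), sub_self, mul_zero]
  calc ∫ x in Ioi a, f x * k x = ∫ x in Ioi a, (f x * (k x - c) + c * f x) := by
        congr 1; funext x; ring
    _ = ∫ x in Ioi a, f x * (k x - c) := by
        rw [integral_add (hk.of_forall_sdiff_eq_zero measurableSet_Ioi hvanish) (hf.const_mul c),
          MeasureTheory.integral_const_mul, hf0, mul_zero, add_zero]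
    _ = ∫ x in Ioo a b, f x * (k x - c) :=
        setIntegral_eq_of_subset_of_forall_sdiff_eq_zero measurableSet_Ioi Ioo_subset_Ioi_self
          hvanish

theorem integral_perturbation_mul_one_sub_mul {h H : ℝ → ℝ} {t u θ : ℝ}
    (hH : ∀ y, H y = ∫ s in (0:ℝ)..y, h s) (hh : ContinuousOn h (Icc 0 t))
    (hu : u ∈ Icc 0 t) :
    ∫ y in (0:ℝ)..u, (1 - exp (-y) + θ * H y) * (1 - (1 - exp (-y) + θ * H y))
        * (exp (-y) + θ * h y)
      = (1 - exp (-u) + θ * H u) ^ 2 / 2 - (1 - exp (-u) + θ * H u) ^ 3 / 3 := by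
  have hHc : ContinuousOn H (Icc 0 t) :=
    funext hH ▸ continuousOn_integral_of_continuousOn_Icc (hu.1.trans hu.2) hh
  have hderiv : ∀ y ∈ Ioo 0 t,
      HasDerivAt (fun y => 1 - exp (-y) + θ * H y) (exp (-y) + θ * h y) y := by
    intro y hy
    rw [funext hH]
    exact (((hasDerivAt_neg y).exp.const_sub 1).add
      ((hasDerivAt_integral_of_continuousOn_Icc hh hy).const_mul θ)).congr_deriv (by ring)
  rw [integral_mul_one_sub_mul_deriv (by fun_prop) hderiv (by fun_prop) hu, hH 0]
  simp

theorem integral_exp_neg_mul_comp_sub (H : ℝ → ℝ) (t : ℝ) :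
    ∫ x in (0:ℝ)..t, exp (-x) * ((1 - exp (-(t - x))) * (1 - (1 - exp (-(t - x))))) * H (t - x)
      = exp (-t) * ∫ v in (0:ℝ)..t, (1 - exp (-v)) * H v := by
  have hpt (x : ℝ) : exp (-x) * ((1 - exp (-(t - x))) * (1 - (1 - exp (-(t - x))))) * H (t - x)
      = exp (-t) * ((1 - exp (-(t - x))) * H (t - x)) := by
    have hexp : exp (-x) * exp (-(t - x)) = exp (-t) := by rw [← exp_add]; ring_nf
    linear_combination (1 - exp (-(t - x))) * H (t - x) * hexp
  simp_rw [hpt, intervalIntegral.integral_const_mul]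
  rw [integral_comp_sub_left (fun v => (1 - exp (-v)) * H v) t, sub_self, sub_zero]

noncomputable def firstVariationKernel (t s : ℝ) : ℝ :=
  3 * (1 - exp (-t)) ^ 2 - 6 * ((1 - exp (-(t - s))) ^ 2 / 2 - (1 - exp (-(t - s))) ^ 3 / 3)
    - 6 * exp (-t) * ((t + exp (-t)) - (s + exp (-s)))

theorem four_mul_xiK_sub_xiK_self {s t : ℝ} (hst : s < t) :
    4 * (xiK s t - xiK t t) = firstVariationKernel t s := by
  simp only [xiK, firstVariationKernel, if_pos hst, if_neg hst.not_ge, lt_irrefl, if_false,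
    le_refl, if_true, add_zero, zero_add]
  -- express every exponential through `exp s` and `exp t`, so that `field_simp; ring` applies
  rw [show -s - 3 * t = -s + -t + -t + -t by ring, show -(t - s) = s + -t by ring,
    show -(3 * t) = -t + -t + -t by ring, show (4:ℝ) * s = s + s + s + s by ring,
    show (2:ℝ) * t = t + t by ring, show (3:ℝ) * s + t = s + s + s + t by ring,
    show (3:ℝ) * t = t + t + t by ring]
  simp only [exp_add, exp_neg]
  field_simp
  ring

theorem four_mul_integral_mul_xiK {h : ℝ → ℝ} {t : ℝ} (ht : 0 < t)
    (hcont : ContinuousOn h (Icc 0 t)) (hint : IntegrableOn h (Ioi 0))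
    (hzero : ∫ x in Ioi (0:ℝ), h x = 0) :
    4 * ∫ x in Ioi (0:ℝ), h x * xiK x t
      = ∫ s in (0:ℝ)..t, h s * firstVariationKernel t s := by
  have hK : ∀ s ∈ Ioo 0 t, 4 * (h s * (xiK s t - xiK t t)) = h s * firstVariationKernel t s :=
    fun s hs => by rw [← four_mul_xiK_sub_xiK_self hs.2]; ring
  have hIoo : IntegrableOn (fun s => h s * (xiK s t - xiK t t)) (Ioo 0 t) := by
    have hKc : ContinuousOn (fun s => h s * firstVariationKernel t s) (Icc 0 t) := by
      unfold firstVariationKernel; fun_prop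
    refine IntegrableOn.congr_fun
      ((hKc.integrableOn_Icc.mono_set Ioo_subset_Icc_self).div_const 4) (fun s hs => ?_)
      measurableSet_Ioo
    rw [← hK s hs]
    ring
  have hconst : ∀ x, t ≤ x → xiK x t = xiK t t := fun x hx => by simp [xiK, hx.not_gt]
  rw [setIntegral_Ioi_mul_eq_setIntegral_Ioo_sub hint hzero hIoo hconst,
    ← MeasureTheory.integral_const_mul, setIntegral_congr_fun measurableSet_Ioo hK,
    intervalIntegral.integral_of_le ht.le, integral_Ioc_eq_integral_Ioo]

theorem integral_mul_firstVariationKernel {h : ℝ → ℝ} {t : ℝ} (ht : 0 < t)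
    (hcont : ContinuousOn h (Icc 0 t)) :
    ∫ s in (0:ℝ)..t, h s * firstVariationKernel t s
      = 3 * (1 - exp (-t)) ^ 2 * (∫ s in (0:ℝ)..t, h s)
        - 6 * ∫ x in (0:ℝ)..t,
          (h x * ((1 - exp (-(t - x))) ^ 2 / 2 - (1 - exp (-(t - x))) ^ 3 / 3)
            + exp (-x) * ((1 - exp (-(t - x))) * (1 - (1 - exp (-(t - x)))))
              * ∫ s in (0:ℝ)..(t - x), h s) := by
  set F : ℝ → ℝ := fun s => (1 - exp (-(t - s))) ^ 2 / 2 - (1 - exp (-(t - s))) ^ 3 / 3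
  set W : ℝ → ℝ := fun s => s + exp (-s)
  have hparts : ∫ x in (0:ℝ)..t, exp (-x) * ((1 - exp (-(t - x))) * (1 - (1 - exp (-(t - x)))))
        * ∫ s in (0:ℝ)..(t - x), h s
      = exp (-t) * ∫ s in (0:ℝ)..t, h s * (W t - W s) := by
    rw [integral_exp_neg_mul_comp_sub (fun y => ∫ s in (0:ℝ)..y, h s) t,
      integral_deriv_mul_primitive ht.le hcont (fun x => ?_) (by fun_prop)]
    exact ((hasDerivAt_id x).add (hasDerivAt_neg x).exp).congr_deriv (by ring)
  have hhi : IntervalIntegrable h volume 0 t := hcont.intervalIntegrable_of_Icc ht.le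
  have hhF : IntervalIntegrable (fun s => h s * F s) volume 0 t :=
    (hcont.mul (by fun_prop)).intervalIntegrable_of_Icc ht.le
  have hhW : IntervalIntegrable (fun s => h s * (W t - W s)) volume 0 t :=
    (hcont.mul (by fun_prop)).intervalIntegrable_of_Icc ht.le
  have hE : IntervalIntegrable (fun x => exp (-x) * ((1 - exp (-(t - x))) *
      (1 - (1 - exp (-(t - x))))) * ∫ s in (0:ℝ)..(t - x), h s) volume 0 t :=
    (ContinuousOn.mul (by fun_prop) (continuousOn_integral_of_continuousOn_Icc ht.le
      hcont).comp_const_sub_Icc).intervalIntegrable_of_Icc ht.le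
  have hlin : ∀ s, h s * firstVariationKernel t s
      = 3 * (1 - exp (-t)) ^ 2 * h s - 6 * (h s * F s) - 6 * exp (-t) * (h s * (W t - W s)) :=
    fun s => by unfold firstVariationKernel; ring
  simp_rw [hlin]
  rw [integral_add hhF hE, hparts,
    integral_sub ((hhi.const_mul _).sub (hhF.const_mul _)) (hhW.const_mul _),
    integral_sub (hhi.const_mul _) (hhF.const_mul _), intervalIntegral.integral_const_mul,
    intervalIntegral.integral_const_mul, intervalIntegral.integral_const_mul]
  ring

theorem stmt_8_general (h : ℝ → ℝ)
    (hcont : ContinuousOn h (Ici 0))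
    (hint : IntegrableOn h (Ioi 0))
    (hzero : (∫ x in Ioi (0:ℝ), h x) = 0)
    (H : ℝ → ℝ) (Hdef : ∀ y, H y = ∫ s in (0:ℝ)..y, h s)
    (g : ℝ → ℝ → ℝ) (gdef : ∀ θ x, g θ x = exp (-x) + θ * h x)
    (G : ℝ → ℝ → ℝ) (Gdef : ∀ θ y, G θ y = 1 - exp (-y) + θ * H y)
    (a : ℝ → ℝ → ℝ)
    (adef : ∀ t θ, a t θ = (G θ t)^3 - 6 * ∫ x in (0:ℝ)..t, g θ x *
        ∫ y in (0:ℝ)..(t - x), G θ y * (1 - G θ y) * g θ y) :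
    ∀ t : ℝ, 0 < t →
      HasDerivAt (fun θ => a t θ) (4 * ∫ x in Ioi (0:ℝ), h x * xiK x t) 0 := by
  intro t ht
  have hh : ContinuousOn h (Icc 0 t) := hcont.mono Icc_subset_Ici_self
  have hH : ContinuousOn H (Icc 0 t) :=
    funext Hdef ▸ continuousOn_integral_of_continuousOn_Icc ht.le hh
  have ha : (fun θ => a t θ) = fun θ => (1 - exp (-t) + θ * H t) ^ 3
      - 6 * ∫ x in (0:ℝ)..t, (exp (-x) + θ * h x)
        * ((1 - exp (-(t - x)) + θ * H (t - x)) ^ 2 / 2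
          - (1 - exp (-(t - x)) + θ * H (t - x)) ^ 3 / 3) := by
    funext θ
    simp only [adef, Gdef, gdef]
    congr 2
    refine integral_congr fun x hx => ?_
    rw [uIcc_of_le ht.le] at hx
    rw [integral_perturbation_mul_one_sub_mul Hdef hh ⟨by linarith [hx.2], by linarith [hx.1]⟩]
  have hcubic : HasDerivAt (fun θ => (1 - exp (-t) + θ * H t) ^ 3)
      (3 * (1 - exp (-t)) ^ 2 * H t) 0 :=
    ((((hasDerivAt_id' (0:ℝ)).mul_const (H t)).const_add _).fun_pow 3).congr_deriv (by simp)
  have hlin := hasDerivAt_integral_affine_mul_cubic (a := 0) (b := t) (p := fun x => exp (-x))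
    (q := h) (A := fun x => 1 - exp (-(t - x))) (B := fun x => H (t - x))
    (by fun_prop) (by rwa [uIcc_of_le ht.le]) (by fun_prop)
    (by rw [uIcc_of_le ht.le]; exact hH.comp_const_sub_Icc)
  rw [ha, four_mul_integral_mul_xiK ht hh hint hzero, integral_mul_firstVariationKernel ht hh]
  simp only [← Hdef]
  exact hcubic.sub (hlin.const_mul 6)

/-- Derivative at `θ = 0` of `a(t,θ)` built from the perturbed density
`g(x,θ) = e^{−x} + θh(x)`: it equals `4·∫₀^∞ h(x)ξ(x,t) dx` for every `t > 0`. -/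
theorem stmt_8 (h : ℝ → ℝ)
    (hbd : ∃ M : ℝ, ∀ x, 0 ≤ x → |h x| ≤ M)
    (hcont : ContinuousOn h (Ici 0))
    (hint : IntegrableOn h (Ioi 0))
    (hzero : (∫ x in Ioi (0:ℝ), h x) = 0)
    (H : ℝ → ℝ) (Hdef : ∀ y, H y = ∫ s in (0:ℝ)..y, h s)
    (g : ℝ → ℝ → ℝ) (gdef : ∀ θ x, g θ x = exp (-x) + θ * h x)
    (G : ℝ → ℝ → ℝ) (Gdef : ∀ θ y, G θ y = 1 - exp (-y) + θ * H y)
    (a : ℝ → ℝ → ℝ)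
    (adef : ∀ t θ, a t θ = (G θ t)^3 - 6 * ∫ x in (0:ℝ)..t, g θ x *
        ∫ y in (0:ℝ)..(t - x), G θ y * (1 - G θ y) * g θ y) :
    ∀ t : ℝ, 0 < t →
      HasDerivAt (fun θ => a t θ) (4 * ∫ x in Ioi (0:ℝ), h x * xiK x t) 0 :=
  stmt_8_general h hcont hint hzero H Hdef g gdef G Gdef a adef
end

section
/- Let h(x) = e^{−x}·(1 + log x − x·log x) for x > 0 (the θ-derivative at θ = 0 of the Weibull density (1+θ)x^θ e^{−x^{1+θ}}). Then ∫₀^∞ h(x)²·e^{x} dx − (∫₀^∞ x·h(x) dx)² = π²/6. (Indeed ∫₀^∞ h(x)²e^{x} dx = π²/6 + (γ−1)² and ∫₀^∞ x·h(x) dx = γ − 1, where γ is the Euler–Mascheroni constant.) -/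
open Real MeasureTheory Set

open Filter Asymptotics Topology

/-!
Expanding `h(x)² eˣ` and `x h(x)` reduces both integrals to the moments
`∫₀^∞ xᵏ (log x)ʲ e^{-x} dx = Γ⁽ʲ⁾(k + 1)` with `j, k ≤ 2`, obtained by differentiating the
Mellin integral of `Γ` under the integral sign. Differentiating `Γ(s + 1) = s Γ(s)` reduces these
to `Γ'(1) = -γ` and `Γ''(1) = γ² + ψ'(1)`. Finally `ψ'(1) = π²/6`: differentiating the logarithms
of the reflection and duplication formulas twice gives `ψ'(s) + ψ'(1 - s) = π² / sin² (π s)` and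
`ψ'(s) + ψ'(s + 1/2) = 4 ψ'(2s)`, so `2ψ'(1/2) = π²` and `ψ'(1/2) + ψ'(1) = 4ψ'(1)`.
-/

/-- The θ-derivative at `θ = 0` of the Weibull density `(1+θ)x^θ e^{−x^{1+θ}}`. -/
noncomputable def hWeibull (x : ℝ) : ℝ := exp (-x) * (1 + log x - x * log x)

noncomputable def logPowExpNeg (j : ℕ) (x : ℝ) : ℂ := ((log x ^ j * exp (-x) : ℝ) : ℂ)

lemma log_smul_logPowExpNeg (j : ℕ) (x : ℝ) :
    log x • logPowExpNeg j x = logPowExpNeg (j + 1) x := by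
  simp only [logPowExpNeg, Complex.real_smul, ← Complex.ofReal_mul, pow_succ]
  ring_nf

lemma locallyIntegrableOn_logPowExpNeg (j : ℕ) :
    LocallyIntegrableOn (logPowExpNeg j) (Ioi 0) := by
  refine ContinuousOn.locallyIntegrableOn ?_ measurableSet_Ioi
  unfold logPowExpNeg
  fun_prop (disch := intro x hx; exact ne_of_gt hx)

lemma norm_logPowExpNeg_zero (x : ℝ) : ‖logPowExpNeg 0 x‖ = exp (-x) := by
  rw [logPowExpNeg, Complex.norm_real, pow_zero, one_mul, norm_of_nonneg (exp_pos _).le]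

lemma logPowExpNeg_isBigO_atTop (j : ℕ) (a : ℝ) : logPowExpNeg j =O[atTop] (· ^ (-a)) := by
  induction j generalizing a with
  | zero =>
    refine IsBigO.trans ?_ (isLittleO_exp_neg_mul_rpow_atTop zero_lt_one (-a)).isBigO
    exact isBigO_of_le atTop fun x ↦ by
      rw [norm_logPowExpNeg_zero, neg_one_mul, norm_of_nonneg (exp_pos _).le]
  | succ j ih =>
    exact (isBigO_rpow_top_log_smul (lt_add_one a) (ih (a + 1))).congr_left
      (log_smul_logPowExpNeg j)

lemma logPowExpNeg_isBigO_nhdsGT_zero (j : ℕ) {b : ℝ} (hb : 0 < b) :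
    logPowExpNeg j =O[𝓝[>] 0] (· ^ (-b)) := by
  induction j generalizing b with
  | zero =>
    refine IsBigO.of_bound 1 ?_
    filter_upwards [Ioo_mem_nhdsGT (zero_lt_one' ℝ)] with x ⟨hx0, hx1⟩
    rw [norm_logPowExpNeg_zero, norm_of_nonneg (rpow_nonneg hx0.le _), one_mul]
    calc exp (-x) ≤ 1 := exp_le_one_iff.mpr (by linarith)
      _ ≤ x ^ (-b) := one_le_rpow_of_pos_of_le_one_of_nonpos hx0 hx1.le (by linarith)
  | succ j ih =>
    exact (isBigO_rpow_zero_log_smul (half_lt_self hb) (ih (half_pos hb))).congr_left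
      (log_smul_logPowExpNeg j)

lemma mellinConvergent_logPowExpNeg (j : ℕ) {s : ℂ} (hs : 0 < s.re) :
    MellinConvergent (logPowExpNeg j) s :=
  mellinConvergent_of_isBigO_rpow (locallyIntegrableOn_logPowExpNeg j)
    (logPowExpNeg_isBigO_atTop j _) (lt_add_one _)
    (logPowExpNeg_isBigO_nhdsGT_zero j (half_pos hs)) (half_lt_self hs)

lemma hasDerivAt_mellin_logPowExpNeg (j : ℕ) {s : ℂ} (hs : 0 < s.re) :
    HasDerivAt (mellin (logPowExpNeg j)) (mellin (logPowExpNeg (j + 1)) s) s := by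
  have h := (mellin_hasDerivAt_of_isBigO_rpow (locallyIntegrableOn_logPowExpNeg j)
    (logPowExpNeg_isBigO_atTop j _) (lt_add_one _)
    (logPowExpNeg_isBigO_nhdsGT_zero j (half_pos hs)) (half_lt_self hs)).2
  simpa only [log_smul_logPowExpNeg] using h

lemma mellin_logPowExpNeg_zero {s : ℂ} (hs : 0 < s.re) :
    mellin (logPowExpNeg 0) s = Complex.Gamma s := by
  rw [Complex.Gamma_eq_integral hs, Complex.GammaIntegral_eq_mellin]
  congr 1; ext x; simp [logPowExpNeg]

/-- The `j`-th derivative of `Γ` on `(0, ∞)` (a junk value for `s ≤ 0`). -/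
noncomputable def GammaDeriv (j : ℕ) (s : ℝ) : ℝ := (mellin (logPowExpNeg j) s).re

lemma hasDerivAt_GammaDeriv (j : ℕ) {s : ℝ} (hs : 0 < s) :
    HasDerivAt (GammaDeriv j) (GammaDeriv (j + 1) s) s :=
  (hasDerivAt_mellin_logPowExpNeg j (by simpa using hs)).real_of_complex

lemma GammaDeriv_zero {s : ℝ} (hs : 0 < s) : GammaDeriv 0 s = Gamma s := by
  rw [GammaDeriv, mellin_logPowExpNeg_zero (by simpa using hs), Complex.Gamma_ofReal,
    Complex.ofReal_re]

lemma hasDerivAt_Gamma_GammaDeriv {s : ℝ} (hs : 0 < s) :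
    HasDerivAt Gamma (GammaDeriv 1 s) s :=
  (hasDerivAt_GammaDeriv 0 hs).congr_of_eventuallyEq
    ((eventually_gt_nhds hs).mono fun _ ht ↦ (GammaDeriv_zero ht).symm)

lemma cpow_smul_logPowExpNeg (j k : ℕ) (x : ℝ) :
    (x : ℂ) ^ (((k + 1 : ℝ) : ℂ) - 1) • logPowExpNeg j x =
      ((x ^ k * log x ^ j * exp (-x) : ℝ) : ℂ) := by
  have hk : ((k + 1 : ℝ) : ℂ) - 1 = (k : ℂ) := by push_cast; ring
  rw [hk, Complex.cpow_natCast, logPowExpNeg, smul_eq_mul]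
  push_cast
  ring

lemma integrable_pow_mul_log_pow_mul_exp_neg (j k : ℕ) :
    Integrable (fun x ↦ x ^ k * log x ^ j * exp (-x)) (volume.restrict (Ioi 0)) := by
  have h := (mellinConvergent_logPowExpNeg j (s := ((k + 1 : ℝ) : ℂ))
    (by rw [Complex.ofReal_re]; positivity)).congr_fun
    (fun x _ ↦ cpow_smul_logPowExpNeg j k x) measurableSet_Ioi
  simpa only [RCLike.re_to_complex, Complex.ofReal_re] using h.re

lemma integral_pow_mul_log_pow_mul_exp_neg (j k : ℕ) :
    ∫ x in Ioi (0 : ℝ), x ^ k * log x ^ j * exp (-x) = GammaDeriv j (k + 1) := by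
  rw [GammaDeriv, mellin, setIntegral_congr_fun measurableSet_Ioi
    (fun x _ ↦ cpow_smul_logPowExpNeg j k x), integral_complex_ofReal, Complex.ofReal_re]

lemma Set.EqOn.hasDerivAt_unique {f g f' g' : ℝ → ℝ} {U : Set ℝ} (hfg : EqOn f g U)
    (hU : IsOpen U) (hf : ∀ x ∈ U, HasDerivAt f (f' x) x)
    (hg : ∀ x ∈ U, HasDerivAt g (g' x) x) : EqOn f' g' U := fun x hx ↦
  (hf x hx).unique ((hg x hx).congr_of_eventuallyEq
    (hfg.eventuallyEq_of_mem (hU.mem_nhds hx)))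

lemma GammaDeriv_one_add_one {s : ℝ} (hs : 0 < s) :
    GammaDeriv 1 (s + 1) = Gamma s + s * GammaDeriv 1 s := by
  refine Set.EqOn.hasDerivAt_unique (f := fun t ↦ Gamma (t + 1)) (g := fun t ↦ t * Gamma t)
    (f' := fun t ↦ GammaDeriv 1 (t + 1)) (g' := fun t ↦ Gamma t + t * GammaDeriv 1 t)
    (fun t ht ↦ Gamma_add_one (ne_of_gt ht)) isOpen_Ioi
    (fun t ht ↦ (hasDerivAt_Gamma_GammaDeriv (by linarith [mem_Ioi.mp ht])).comp_add_const t 1)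
    (fun t ht ↦ ((hasDerivAt_id t).mul (hasDerivAt_Gamma_GammaDeriv ht)).congr_deriv
      (by rw [id, one_mul])) hs

lemma GammaDeriv_two_add_one {s : ℝ} (hs : 0 < s) :
    GammaDeriv 2 (s + 1) = 2 * GammaDeriv 1 s + s * GammaDeriv 2 s := by
  refine Set.EqOn.hasDerivAt_unique (f := fun t ↦ GammaDeriv 1 (t + 1))
    (g := fun t ↦ Gamma t + t * GammaDeriv 1 t) (f' := fun t ↦ GammaDeriv 2 (t + 1))
    (g' := fun t ↦ 2 * GammaDeriv 1 t + t * GammaDeriv 2 t)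
    (fun t ht ↦ GammaDeriv_one_add_one ht) isOpen_Ioi
    (fun t ht ↦ (hasDerivAt_GammaDeriv 1 (by linarith [mem_Ioi.mp ht])).comp_add_const t 1)
    (fun t ht ↦ ((hasDerivAt_Gamma_GammaDeriv ht).add
      ((hasDerivAt_id t).mul (hasDerivAt_GammaDeriv 1 ht))).congr_deriv
        (by rw [id]; ring)) hs

noncomputable def realDigamma (s : ℝ) : ℝ := GammaDeriv 1 s / Gamma s

noncomputable def realTrigamma (s : ℝ) : ℝ :=
  (GammaDeriv 2 s * Gamma s - GammaDeriv 1 s ^ 2) / Gamma s ^ 2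

lemma hasDerivAt_log_Gamma {s : ℝ} (hs : 0 < s) :
    HasDerivAt (fun t ↦ log (Gamma t)) (realDigamma s) s :=
  (hasDerivAt_Gamma_GammaDeriv hs).log (Gamma_pos_of_pos hs).ne'

lemma hasDerivAt_realDigamma {s : ℝ} (hs : 0 < s) :
    HasDerivAt realDigamma (realTrigamma s) s :=
  ((hasDerivAt_GammaDeriv 1 hs).div (hasDerivAt_Gamma_GammaDeriv hs)
    (Gamma_pos_of_pos hs).ne').congr_deriv (by simp only [realTrigamma, Nat.reduceAdd, sq])

lemma hasDerivAt_pi_mul_cot {s : ℝ} (hs : sin (π * s) ≠ 0) :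
    HasDerivAt (fun t ↦ π * cos (π * t) / sin (π * t)) (-(π ^ 2 / sin (π * s) ^ 2)) s := by
  have hπ : HasDerivAt (fun t ↦ π * t) π s := by simpa using (hasDerivAt_id s).const_mul π
  refine ((hπ.cos.const_mul π).div hπ.sin hs).congr_deriv ?_
  field_simp
  linear_combination -sin_sq_add_cos_sq (π * s)

lemma realTrigamma_add_realTrigamma_one_sub {s : ℝ} (hs : s ∈ Ioo 0 1) :
    realTrigamma s + realTrigamma (1 - s) = π ^ 2 / sin (π * s) ^ 2 := by
  have hsin : ∀ t ∈ Ioo (0 : ℝ) 1, 0 < sin (π * t) := fun t ht ↦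
    sin_pos_of_pos_of_lt_pi (mul_pos pi_pos ht.1) (by nlinarith [pi_pos, ht.2])
  have h1 (t : ℝ) : HasDerivAt (fun t ↦ 1 - t) (-1) t := by
    simpa using (hasDerivAt_id t).const_sub 1
  have hlog : EqOn (fun t ↦ log (Gamma t) + log (Gamma (1 - t)))
      (fun t ↦ log π - log (sin (π * t))) (Ioo 0 1) := fun t ht ↦ by
    dsimp only
    rw [← log_mul (Gamma_pos_of_pos ht.1).ne' (Gamma_pos_of_pos (sub_pos.2 ht.2)).ne',
      Gamma_mul_Gamma_one_sub, log_div pi_ne_zero (hsin t ht).ne']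
  have hdigamma : EqOn (fun t ↦ realDigamma t - realDigamma (1 - t))
      (fun t ↦ -(π * cos (π * t) / sin (π * t))) (Ioo 0 1) := by
    refine hlog.hasDerivAt_unique isOpen_Ioo (fun t ht ↦ ?_) (fun t ht ↦ ?_)
    · exact ((hasDerivAt_log_Gamma ht.1).add
        ((hasDerivAt_log_Gamma (sub_pos.2 ht.2)).comp t (h1 t))).congr_deriv (by ring)
    · have hπ : HasDerivAt (fun t ↦ π * t) π t := by simpa using (hasDerivAt_id t).const_mul π
      refine ((hπ.sin.log (hsin t ht).ne').const_sub (log π)).congr_deriv ?_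
      ring
  have htrigamma : EqOn (fun t ↦ realTrigamma t + realTrigamma (1 - t))
      (fun t ↦ π ^ 2 / sin (π * t) ^ 2) (Ioo 0 1) := by
    refine hdigamma.hasDerivAt_unique isOpen_Ioo (fun t ht ↦ ?_) (fun t ht ↦ ?_)
    · exact ((hasDerivAt_realDigamma ht.1).sub
        ((hasDerivAt_realDigamma (sub_pos.2 ht.2)).comp t (h1 t))).congr_deriv (by ring)
    · exact (hasDerivAt_pi_mul_cot (hsin t ht).ne').neg.congr_deriv (neg_neg _)
  exact htrigamma hs

lemma realTrigamma_add_realTrigamma_add_half {s : ℝ} (hs : 0 < s) :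
    realTrigamma s + realTrigamma (s + 1 / 2) = 4 * realTrigamma (2 * s) := by
  have h2 (t : ℝ) : HasDerivAt (fun t ↦ 2 * t) 2 t := by
    simpa using (hasDerivAt_id t).const_mul 2
  have hlog : EqOn (fun t ↦ log (Gamma t) + log (Gamma (t + 1 / 2)))
      (fun t ↦ log (Gamma (2 * t)) + (1 - 2 * t) * log 2 + log √π) (Ioi 0) := fun t ht ↦ by
    have ht : (0 : ℝ) < t := ht
    dsimp only
    rw [← log_mul (Gamma_pos_of_pos ht).ne' (Gamma_pos_of_pos (by linarith)).ne',
      Gamma_mul_Gamma_add_half, log_mul (by positivity) (by positivity),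
      log_mul (Gamma_pos_of_pos (by linarith)).ne' (by positivity), log_rpow two_pos]
  have hdigamma : EqOn (fun t ↦ realDigamma t + realDigamma (t + 1 / 2))
      (fun t ↦ 2 * realDigamma (2 * t) - 2 * log 2) (Ioi 0) := by
    refine hlog.hasDerivAt_unique isOpen_Ioi (fun t (ht : 0 < t) ↦ ?_)
      (fun t (ht : 0 < t) ↦ ?_)
    · exact (hasDerivAt_log_Gamma ht).add
        ((hasDerivAt_log_Gamma (by linarith)).comp_add_const t (1 / 2))
    · exact ((((hasDerivAt_log_Gamma (by linarith)).comp t (h2 t)).add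
        (((h2 t).const_sub 1).mul_const (log 2))).add_const (log √π)).congr_deriv (by ring)
  have htrigamma : EqOn (fun t ↦ realTrigamma t + realTrigamma (t + 1 / 2))
      (fun t ↦ 4 * realTrigamma (2 * t)) (Ioi 0) := by
    refine hdigamma.hasDerivAt_unique isOpen_Ioi (fun t (ht : 0 < t) ↦ ?_)
      (fun t (ht : 0 < t) ↦ ?_)
    · exact (hasDerivAt_realDigamma ht).add
        ((hasDerivAt_realDigamma (by linarith)).comp_add_const t (1 / 2))
    · exact ((((hasDerivAt_realDigamma (by linarith)).comp t (h2 t)).const_mul 2).sub_const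
        (2 * log 2)).congr_deriv (by ring)
  exact htrigamma hs

lemma realTrigamma_one_half : realTrigamma (1 / 2) = π ^ 2 / 2 := by
  have h := realTrigamma_add_realTrigamma_one_sub (s := 1 / 2) (by norm_num)
  rw [show π * (1 / 2) = π / 2 by ring, sin_pi_div_two] at h
  norm_num at h
  linarith

lemma realTrigamma_one : realTrigamma 1 = π ^ 2 / 6 := by
  have h := realTrigamma_add_realTrigamma_add_half (s := 1 / 2) (by norm_num)
  norm_num [realTrigamma_one_half] at h
  linarith

local notation "γ" => eulerMascheroniConstant

lemma GammaDeriv_one_one : GammaDeriv 1 1 = -γ :=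
  (hasDerivAt_Gamma_GammaDeriv one_pos).unique hasDerivAt_Gamma_one

lemma GammaDeriv_one_two : GammaDeriv 1 2 = 1 - γ := by
  have h := GammaDeriv_one_add_one one_pos
  norm_num [GammaDeriv_one_one] at h
  linarith

lemma GammaDeriv_one_three : GammaDeriv 1 3 = 3 - 2 * γ := by
  have h := GammaDeriv_one_add_one two_pos
  norm_num [GammaDeriv_one_two] at h
  linarith

lemma GammaDeriv_two_one : GammaDeriv 2 1 = π ^ 2 / 6 + γ ^ 2 := by
  have h := realTrigamma_one
  rw [realTrigamma, Gamma_one, GammaDeriv_one_one] at h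
  linarith

lemma GammaDeriv_two_two : GammaDeriv 2 2 = π ^ 2 / 6 + γ ^ 2 - 2 * γ := by
  have h := GammaDeriv_two_add_one one_pos
  norm_num [GammaDeriv_one_one, GammaDeriv_two_one] at h
  linarith

lemma GammaDeriv_two_three : GammaDeriv 2 3 = 2 - 6 * γ + 2 * γ ^ 2 + π ^ 2 / 3 := by
  have h := GammaDeriv_two_add_one two_pos
  norm_num [GammaDeriv_one_two, GammaDeriv_two_two] at h
  linarith

lemma integral_mul_hWeibull : ∫ x in Ioi (0 : ℝ), x * hWeibull x = γ - 1 := by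
  have hM := integrable_pow_mul_log_pow_mul_exp_neg
  have h (x : ℝ) : x * hWeibull x = x ^ 1 * log x ^ 0 * exp (-x) +
      x ^ 1 * log x ^ 1 * exp (-x) - x ^ 2 * log x ^ 1 * exp (-x) := by
    rw [hWeibull]; ring
  simp (disch := fun_prop) only [h, integral_add, integral_sub,
    integral_pow_mul_log_pow_mul_exp_neg]
  norm_num [GammaDeriv_zero, GammaDeriv_one_two, GammaDeriv_one_three]
  ring

lemma integral_hWeibull_sq_mul_exp :
    ∫ x in Ioi (0 : ℝ), hWeibull x ^ 2 * exp x = π ^ 2 / 6 + (γ - 1) ^ 2 := by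
  have hM := integrable_pow_mul_log_pow_mul_exp_neg
  have h (x : ℝ) : hWeibull x ^ 2 * exp x = x ^ 0 * log x ^ 0 * exp (-x) +
      2 * (x ^ 0 * log x ^ 1 * exp (-x)) - 2 * (x ^ 1 * log x ^ 1 * exp (-x)) +
      x ^ 0 * log x ^ 2 * exp (-x) - 2 * (x ^ 1 * log x ^ 2 * exp (-x)) +
      x ^ 2 * log x ^ 2 * exp (-x) := by
    rw [hWeibull, exp_neg]
    field_simp
    ring
  simp (disch := fun_prop) only [h, integral_add, integral_sub, integral_const_mul,
    integral_pow_mul_log_pow_mul_exp_neg]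
  norm_num [GammaDeriv_zero, GammaDeriv_one_one, GammaDeriv_one_two, GammaDeriv_two_one,
    GammaDeriv_two_two, GammaDeriv_two_three]
  ring

/-- `∫₀^∞ h(x)²·e^x dx − (∫₀^∞ x·h(x) dx)² = π²/6`; indeed
`∫₀^∞ h(x)²e^x dx = π²/6 + (γ−1)²` and `∫₀^∞ x·h(x) dx = γ − 1`. -/
theorem stmt_11 :
    (∫ x in Ioi (0:ℝ), (hWeibull x)^2 * exp x) -
      (∫ x in Ioi (0:ℝ), x * hWeibull x)^2 = π^2/6 ∧
    (∫ x in Ioi (0:ℝ), (hWeibull x)^2 * exp x) =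
      π^2/6 + (Real.eulerMascheroniConstant - 1)^2 ∧
    (∫ x in Ioi (0:ℝ), x * hWeibull x) = Real.eulerMascheroniConstant - 1 := by
  rw [integral_hWeibull_sq_mul_exp, integral_mul_hWeibull]
  exact ⟨by ring, rfl, rfl⟩
end

section
/- For every θ > 0, with g(x,θ) = (1 + θx)e^{−x}/(1 + θ) the extended exponential density and G(y,θ) = ∫₀^y g(u,θ) du = 1 − e^{−y}(1 + θ + θy)/(1 + θ) its distribution function, one has 1/4 − 6·∫₀^∞ g(x,θ)·(∫₀^∞ G(y,θ)·(1 − G(y,θ))·g(y,θ)·(∫_{x+y}^∞ g(z,θ) dz) dy) dx = θ²·(168 + 356θ + 161θ²)/(2304·(1 + θ)⁴). -/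
/-!
Both `g(·,θ)` and the survival function `1 - G(·,θ)` are linear polynomials times `e^{-x}`,
so every integral in the statement is of the form `∫_a^∞ p(t) e^{-rt} dt` with `p` a polynomial.
Integration by parts turns such an integral into `(p(a) e^{-ra} + ∫_a^∞ p'(t) e^{-rt} dt) / r`,
and iterating until the derivative vanishes evaluates it in closed form. The inner integral
comes out as `e^{-x} (1/12 + c(θ) x)`, after which the outer integral is of the same kind.
-/

open Real MeasureTheory Set

/-- The extended exponential (EE) density `g(x,θ) = (1 + θx)e^{−x}/(1 + θ)`. -/
noncomputable def gEE (θ x : ℝ) : ℝ := (1 + θ * x) * exp (-x) / (1 + θ)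

/-- The EE distribution function `G(y,θ) = 1 − e^{−y}(1 + θ + θy)/(1 + θ)`. -/
noncomputable def GEE (θ y : ℝ) : ℝ := 1 - exp (-y) * (1 + θ + θ * y) / (1 + θ)

open Filter Topology Polynomial

namespace Polynomial

theorem tendsto_eval_mul_exp_neg_mul_atTop (p : ℝ[X]) {r : ℝ} (hr : 0 < r) :
    Tendsto (fun t => p.eval t * exp (-(r * t))) atTop (𝓝 0) := by
  induction p using Polynomial.induction_on' with
  | add p q hp hq => simpa [add_mul] using hp.add hq
  | monomial n a =>
    have := (tendsto_rpow_mul_exp_neg_mul_atTop_nhds_zero n r hr).const_mul a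
    simp only [rpow_natCast, mul_zero] at this
    simpa [mul_assoc] using this

theorem integrableOn_eval_mul_exp_neg_mul (p : ℝ[X]) {r : ℝ} (hr : 0 < r) (a : ℝ) :
    IntegrableOn (fun t => p.eval t * exp (-(r * t))) (Ioi a) := by
  refine integrable_of_isBigO_exp_neg (half_pos hr) (by fun_prop) ?_
  have h := (p.tendsto_eval_mul_exp_neg_mul_atTop (half_pos hr)).isBigO_one ℝ |>.mul
    (Asymptotics.isBigO_refl (fun t => exp (-(r / 2 * t))) atTop)
  refine h.congr (fun t => ?_) (fun t => by simp [neg_mul])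
  rw [mul_assoc, ← exp_add]
  ring_nf

theorem integral_Ioi_eval_mul_exp_neg_mul (p : ℝ[X]) {r : ℝ} (hr : 0 < r) (a : ℝ) :
    ∫ t in Ioi a, p.eval t * exp (-(r * t)) =
      (p.eval a * exp (-(r * a)) + ∫ t in Ioi a, p.derivative.eval t * exp (-(r * t))) / r := by
  have hderiv : ∀ t ∈ Ici a, HasDerivAt (fun t => -(p.eval t * exp (-(r * t))) / r)
      (p.eval t * exp (-(r * t)) - p.derivative.eval t * exp (-(r * t)) / r) t := by
    intro t _
    have he : HasDerivAt (fun t => exp (-(r * t))) (exp (-(r * t)) * -r) t := by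
      simpa using ((hasDerivAt_id t).const_mul r).neg.exp
    refine (((p.hasDerivAt t).mul he).neg.div_const r).congr_deriv ?_
    field_simp
    ring
  have hp := p.integrableOn_eval_mul_exp_neg_mul hr a
  have hp' := (p.derivative.integrableOn_eval_mul_exp_neg_mul hr a).div_const r
  have hlim := (p.tendsto_eval_mul_exp_neg_mul_atTop hr).neg.div_const r
  rw [neg_zero, zero_div] at hlim
  have h := integral_Ioi_of_hasDerivAt_of_tendsto' hderiv (hp.sub hp') hlim
  rw [integral_sub hp hp', integral_div] at h
  rw [eq_div_iff hr.ne']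
  field_simp at h
  linarith

end Polynomial

noncomputable def eeDensityPoly (θ : ℝ) : ℝ[X] := C (1 + θ)⁻¹ * (1 + C θ * X)

noncomputable def eeSurvivalPoly (θ : ℝ) : ℝ[X] := C (1 + θ)⁻¹ * (C (1 + θ) + C θ * X)

-- `1 * x` keeps the exponent in the shape `r * t` expected by the integration by parts lemma.
theorem gEE_eq_eval (θ x : ℝ) : gEE θ x = (eeDensityPoly θ).eval x * exp (-(1 * x)) := by
  simp only [gEE, eeDensityPoly, eval_mul, eval_C, eval_add, eval_one, eval_X, one_mul]
  ring

theorem one_sub_GEE_eq_eval (θ x : ℝ) :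
    1 - GEE θ x = (eeSurvivalPoly θ).eval x * exp (-(1 * x)) := by
  simp only [GEE, sub_sub_cancel, eeSurvivalPoly, eval_mul, eval_C, eval_add, eval_X, one_mul]
  ring

theorem integral_Ioi_gEE (θ t : ℝ) : ∫ z in Ioi t, gEE θ z = 1 - GEE θ t := by
  simp only [gEE_eq_eval, one_sub_GEE_eq_eval]
  simp only [integral_Ioi_eval_mul_exp_neg_mul _ one_pos, eeDensityPoly, derivative_mul,
    derivative_add, derivative_C, derivative_X, derivative_one, zero_mul, mul_zero, add_zero,
    zero_add, mul_one, eval_zero, integral_zero]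
  simp only [eeSurvivalPoly, map_add, map_one, eval_mul, eval_C, eval_add, eval_one, eval_X]
  ring

theorem integral_GEE_mul_one_sub_GEE_mul_gEE_mul_one_sub_GEE_add {θ : ℝ} (hθ : 1 + θ ≠ 0)
    (x : ℝ) :
    ∫ y in Ioi (0:ℝ), GEE θ y * (1 - GEE θ y) * gEE θ y * (1 - GEE θ (x + y)) =
      exp (-x) * (1 / 12 + (288 * θ + 696 * θ^2 + 508 * θ^3 + 127 * θ^4) * x
        / (3456 * (1 + θ)^4)) := by
  have hexpand : ∀ y, GEE θ y * (1 - GEE θ y) * gEE θ y * (1 - GEE θ (x + y)) = exp (-x) *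
      ((eeSurvivalPoly θ * eeDensityPoly θ * (eeSurvivalPoly θ).comp (X + C x)).eval y
          * exp (-(3 * y)) -
        (eeSurvivalPoly θ * eeSurvivalPoly θ * eeDensityPoly θ
          * (eeSurvivalPoly θ).comp (X + C x)).eval y * exp (-(4 * y))) := by
    intro y
    have hG : GEE θ y = 1 - (eeSurvivalPoly θ).eval y * exp (-(1 * y)) := by
      rw [← one_sub_GEE_eq_eval]; ring
    rw [hG, sub_sub_cancel, gEE_eq_eval, one_sub_GEE_eq_eval]
    simp only [eval_mul, eval_comp, eval_add, eval_X, eval_C]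
    rw [show -(1 * (x + y)) = -x + -y by ring, show -(3 * y) = -y + -y + -y by ring,
      show -(4 * y) = -y + -y + -y + -y by ring, one_mul, add_comm y x]
    simp only [exp_add]
    ring
  simp only [hexpand]
  rw [integral_const_mul, integral_sub (integrableOn_eval_mul_exp_neg_mul _ (by norm_num) 0)
    (integrableOn_eval_mul_exp_neg_mul _ (by norm_num) 0)]
  -- `simp` integrates by parts until the derivative of the polynomial normalizes to `0`
  simp only [integral_Ioi_eval_mul_exp_neg_mul _ (show (0:ℝ) < 3 by norm_num),
    integral_Ioi_eval_mul_exp_neg_mul _ (show (0:ℝ) < 4 by norm_num), eeSurvivalPoly,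
    eeDensityPoly, derivative_mul, derivative_add, derivative_C, derivative_X, derivative_one,
    zero_mul, mul_zero, add_zero, zero_add, mul_one, eval_zero, integral_zero, mul_comp,
    add_comp, C_comp, X_comp]
  simp only [map_add, map_one, eval_mul, eval_C, eval_add, eval_one, eval_X, mul_zero, add_zero,
    mul_one, zero_add, neg_zero, exp_zero]
  field_simp
  ring

/-- The limit in probability `b(θ)` for the extended exponential alternative. -/
theorem stmt_13 (θ : ℝ) (hθ : 0 < θ) :
    1/4 - 6 * ∫ x in Ioi (0:ℝ), gEE θ x *
        ∫ y in Ioi (0:ℝ), GEE θ y * (1 - GEE θ y) * gEE θ y * (∫ z in Ioi (x + y), gEE θ z) =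
      θ^2 * (168 + 356 * θ + 161 * θ^2) / (2304 * (1 + θ)^4) := by
  have hθ' : 1 + θ ≠ 0 := by positivity
  have hpoly : ∀ x, gEE θ x * (exp (-x) * (1 / 12 + (288 * θ + 696 * θ^2 + 508 * θ^3
      + 127 * θ^4) * x / (3456 * (1 + θ)^4))) = (eeDensityPoly θ * (C (1 / 12) +
        C ((288 * θ + 696 * θ^2 + 508 * θ^3 + 127 * θ^4) / (3456 * (1 + θ)^4)) * X)).eval x
        * exp (-(2 * x)) := by
    intro x
    rw [gEE_eq_eval, show -(2 * x) = -x + -x by ring, exp_add]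
    simp only [eval_mul, eval_add, eval_C, eval_X, one_mul]
    ring
  simp only [integral_Ioi_gEE, integral_GEE_mul_one_sub_GEE_mul_gEE_mul_one_sub_GEE_add hθ',
    hpoly]
  simp only [integral_Ioi_eval_mul_exp_neg_mul _ (show (0:ℝ) < 2 by norm_num), eeDensityPoly,
    derivative_mul, derivative_add, derivative_C, derivative_X, derivative_one,
    zero_mul, mul_zero, add_zero, zero_add, mul_one, eval_zero, integral_zero]
  simp only [eval_mul, eval_C, eval_add, eval_one, eval_X, mul_zero, add_zero, neg_zero, exp_zero]
  field_simp
  ring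
end

section
/- For every θ > 0 and t ≥ 0, with g(x,θ) = (1 + θx)e^{−x}/(1 + θ) the extended exponential density and G(y,θ) = 1 − e^{−y}(1 + θ + θy)/(1 + θ) its distribution function, one has G(t,θ)³ − 6·∫₀^t g(x,θ)·(∫₀^{t−x} G(y,θ)·(1 − G(y,θ))·g(y,θ) dy) dx = (3/(4(1 + θ)⁴))·e^{−3t}·θ²·(−2 − 8θ − 9θ² − 2t³θ² − 4t²θ(1 + 2θ) + 8e^t(1 + θ)(2 + t + 6θ + 4tθ + t²θ) − t(2 + 10θ + 13θ²) + e^{2t}(−14 − 56θ − 39θ² + t(6 + 18θ + 11θ²))). -/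
/-!
With `S = 1 - G` the survival function, `S' = -g` gives
`∫₀ˢ G (1 - G) g = 1/6 - S(s)²/2 + S(s)³/3`, so the double integral splits into `∫₀ᵗ g = G(t)`
and the convolutions `∫₀ᵗ g(x) S(t - x)ᵏ dx` for `k = 2, 3`. In these the exponentials combine to
`e^{-kt} e^{(k-1)x}` times the polynomial `a bᵏ` in `x`, where `a = 1 + θx` and
`b = 1 + θ + θ(t - x)`, and `p e^{cx}` has the antiderivative `e^{cx} ∑ⱼ (-1)ʲ p⁽ʲ⁾ / c^{j+1}`.
-/

open Real MeasureTheory Set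

noncomputable def SEE (θ y : ℝ) : ℝ := exp (-y) * (1 + θ + θ * y) / (1 + θ)

theorem intervalIntegral.integral_mul_exp_of_hasDerivAt {Q q : ℝ → ℝ} {k : ℝ}
    (hQ : ∀ x, HasDerivAt Q (q x - k * Q x) x) (hq : Continuous q) (a b : ℝ) :
    ∫ x in a..b, q x * exp (k * x) = Q b * exp (k * b) - Q a * exp (k * a) := by
  refine intervalIntegral.integral_eq_sub_of_hasDerivAt (f := fun x => Q x * exp (k * x))
    (fun x _ => ?_) ((hq.mul (by fun_prop)).intervalIntegrable a b)
  refine ((hQ x).mul ((hasDerivAt_id' x).const_mul k).exp).congr_deriv ?_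
  ring

section EE

variable (θ : ℝ)

theorem GEE_eq_one_sub_SEE (y : ℝ) : GEE θ y = 1 - SEE θ y := rfl

theorem SEE_zero (hθ : 1 + θ ≠ 0) : SEE θ 0 = 1 := by
  simp [SEE, hθ]

theorem hasDerivAt_SEE (y : ℝ) : HasDerivAt (SEE θ) (-gEE θ y) y := by
  refine (((hasDerivAt_neg y).exp.mul
    (((hasDerivAt_id' y).const_mul θ).const_add (1 + θ))).div_const (1 + θ)).congr_deriv ?_
  simp only [gEE]
  ring

@[fun_prop]
theorem continuous_gEE : Continuous (gEE θ) := by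
  unfold gEE; fun_prop

@[fun_prop]
theorem continuous_SEE : Continuous (SEE θ) := by
  unfold SEE; fun_prop

theorem integral_GEE_mul_one_sub_mul_gEE (hθ : 1 + θ ≠ 0) (s : ℝ) :
    ∫ y in (0:ℝ)..s, GEE θ y * (1 - GEE θ y) * gEE θ y
      = 1 / 6 - SEE θ s ^ 2 / 2 + SEE θ s ^ 3 / 3 := by
  have hderiv (y : ℝ) : HasDerivAt (fun y => SEE θ y ^ 3 / 3 - SEE θ y ^ 2 / 2)
      (GEE θ y * (1 - GEE θ y) * gEE θ y) y := by
    refine ((((hasDerivAt_SEE θ y).pow 3).div_const 3).sub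
      (((hasDerivAt_SEE θ y).pow 2).div_const 2)).congr_deriv ?_
    simp only [GEE_eq_one_sub_SEE]
    push_cast
    ring
  have hcont : Continuous fun y => GEE θ y * (1 - GEE θ y) * gEE θ y := by
    simp only [GEE_eq_one_sub_SEE]
    fun_prop
  rw [intervalIntegral.integral_eq_sub_of_hasDerivAt (fun y _ => hderiv y)
    (hcont.intervalIntegrable 0 s), SEE_zero θ hθ]
  ring

theorem integral_gEE (hθ : 1 + θ ≠ 0) (t : ℝ) : ∫ x in (0:ℝ)..t, gEE θ x = 1 - SEE θ t := by
  rw [intervalIntegral.integral_eq_sub_of_hasDerivAt (f := -SEE θ)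
    (fun x _ => by simpa using (hasDerivAt_SEE θ x).neg)
    ((continuous_gEE θ).intervalIntegrable 0 t), Pi.neg_apply, Pi.neg_apply, SEE_zero θ hθ]
  ring

theorem gEE_mul_SEE_pow (t x : ℝ) (k : ℕ) :
    gEE θ x * SEE θ (t - x) ^ k = exp (-(k * t)) / (1 + θ) ^ (k + 1) *
      ((1 + θ * x) * (1 + θ + θ * (t - x)) ^ k * exp ((k - 1) * x)) := by
  have hexp : exp (-x) * exp (-(t - x)) ^ k = exp (-(k * t)) * exp ((k - 1) * x) := by
    rw [← Real.exp_nat_mul, ← Real.exp_add, ← Real.exp_add]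
    ring_nf
  simp only [gEE, SEE]
  generalize 1 + θ = c
  rw [div_pow, mul_pow]
  linear_combination (1 + θ * x) * (c + θ * (t - x)) ^ k / c ^ (k + 1) * hexp


theorem integral_gEE_mul_poly_SEE_sub (t : ℝ) :
    ∫ x in (0:ℝ)..t, gEE θ x * (1 / 6 - SEE θ (t - x) ^ 2 / 2 + SEE θ (t - x) ^ 3 / 3)
      = (∫ x in (0:ℝ)..t, gEE θ x) / 6 - (∫ x in (0:ℝ)..t, gEE θ x * SEE θ (t - x) ^ 2) / 2
        + (∫ x in (0:ℝ)..t, gEE θ x * SEE θ (t - x) ^ 3) / 3 := by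
  have hg := continuous_gEE θ
  have hint (k : ℕ) : IntervalIntegrable (fun x => gEE θ x * SEE θ (t - x) ^ k) volume 0 t :=
    Continuous.intervalIntegrable (by fun_prop) 0 t
  rw [← intervalIntegral.integral_div, ← intervalIntegral.integral_div,
    ← intervalIntegral.integral_div, ← intervalIntegral.integral_sub
      ((hg.intervalIntegrable 0 t).div_const 6) ((hint 2).div_const 2),
    ← intervalIntegral.integral_add
      (((hg.intervalIntegrable 0 t).div_const 6).sub ((hint 2).div_const 2))
      ((hint 3).div_const 3)]
  congr 1 with x
  ring

-- `p - p' + p'' - p'''` for `p = a b²`: its product with `eˣ` is a primitive of `p eˣ`.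
noncomputable def eeConvPolySq (θ t x : ℝ) : ℝ :=
  let a := 1 + θ * x
  let b := 1 + θ + θ * (t - x)
  a * b ^ 2 - θ * b ^ 2 + 2 * θ * (a * b) - 4 * θ ^ 2 * b + 2 * θ ^ 2 * a - 6 * θ ^ 3

-- `∑ⱼ (-1)ʲ p⁽ʲ⁾ / 2ʲ⁺¹` for `p = a b³`: its product with `e^{2x}` is a primitive of `p e^{2x}`.
noncomputable def eeConvPolyCube (θ t x : ℝ) : ℝ :=
  let a := 1 + θ * x
  let b := 1 + θ + θ * (t - x)
  1 / 2 * (a * b ^ 3) - θ / 4 * b ^ 3 + 3 * θ / 4 * (a * b ^ 2) - 3 * θ ^ 2 / 4 * b ^ 2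
    + 3 * θ ^ 2 / 4 * (a * b) - 9 * θ ^ 3 / 8 * b + 3 * θ ^ 3 / 8 * a - 3 * θ ^ 4 / 4

theorem hasDerivAt_eeConvPolySq (t x : ℝ) :
    HasDerivAt (eeConvPolySq θ t)
      ((1 + θ * x) * (1 + θ + θ * (t - x)) ^ 2 - 1 * eeConvPolySq θ t x) x := by
  have ha := ((hasDerivAt_id' x).const_mul θ).const_add 1
  have hb := (((hasDerivAt_id' x).const_sub t).const_mul θ).const_add (1 + θ)
  refine ((((((ha.mul (hb.pow 2)).sub ((hb.pow 2).const_mul θ)).add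
    ((ha.mul hb).const_mul (2 * θ))).sub (hb.const_mul (4 * θ ^ 2))).add
    (ha.const_mul (2 * θ ^ 2))).sub (hasDerivAt_const x (6 * θ ^ 3))).congr_deriv ?_
  simp only [eeConvPolySq, Pi.pow_apply]
  push_cast
  ring

theorem hasDerivAt_eeConvPolyCube (t x : ℝ) :
    HasDerivAt (eeConvPolyCube θ t)
      ((1 + θ * x) * (1 + θ + θ * (t - x)) ^ 3 - 2 * eeConvPolyCube θ t x) x := by
  have ha := ((hasDerivAt_id' x).const_mul θ).const_add 1
  have hb := (((hasDerivAt_id' x).const_sub t).const_mul θ).const_add (1 + θ)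
  refine ((((((((ha.mul (hb.pow 3)).const_mul (1 / 2)).sub ((hb.pow 3).const_mul (θ / 4))).add
    ((ha.mul (hb.pow 2)).const_mul (3 * θ / 4))).sub ((hb.pow 2).const_mul (3 * θ ^ 2 / 4))).add
    ((ha.mul hb).const_mul (3 * θ ^ 2 / 4))).sub (hb.const_mul (9 * θ ^ 3 / 8))).add
    (ha.const_mul (3 * θ ^ 3 / 8))).sub (hasDerivAt_const x (3 * θ ^ 4 / 4)) |>.congr_deriv ?_
  simp only [eeConvPolyCube, Pi.pow_apply]
  push_cast
  ring

theorem integral_gEE_mul_SEE_sub_sq (t : ℝ) :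
    ∫ x in (0:ℝ)..t, gEE θ x * SEE θ (t - x) ^ 2
      = exp (-(2 * t)) / (1 + θ) ^ 3 * (eeConvPolySq θ t t * exp t - eeConvPolySq θ t 0) := by
  have h (x : ℝ) : gEE θ x * SEE θ (t - x) ^ 2 = exp (-(2 * t)) / (1 + θ) ^ 3 *
      ((1 + θ * x) * (1 + θ + θ * (t - x)) ^ 2 * exp (1 * x)) := by
    rw [gEE_mul_SEE_pow]; norm_num
  simp only [h]
  rw [intervalIntegral.integral_const_mul,
    intervalIntegral.integral_mul_exp_of_hasDerivAt (hasDerivAt_eeConvPolySq θ t) (by fun_prop)]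
  simp

theorem integral_gEE_mul_SEE_sub_cube (t : ℝ) :
    ∫ x in (0:ℝ)..t, gEE θ x * SEE θ (t - x) ^ 3
      = exp (-(3 * t)) / (1 + θ) ^ 4 *
          (eeConvPolyCube θ t t * exp (2 * t) - eeConvPolyCube θ t 0) := by
  have h (x : ℝ) : gEE θ x * SEE θ (t - x) ^ 3 = exp (-(3 * t)) / (1 + θ) ^ 4 *
      ((1 + θ * x) * (1 + θ + θ * (t - x)) ^ 3 * exp (2 * x)) := by
    rw [gEE_mul_SEE_pow]; norm_num
  simp only [h]
  rw [intervalIntegral.integral_const_mul,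
    intervalIntegral.integral_mul_exp_of_hasDerivAt (hasDerivAt_eeConvPolyCube θ t) (by fun_prop)]
  simp

end EE

theorem stmt_14_general (θ : ℝ) (hθ : 0 < θ) (t : ℝ) :
    (GEE θ t)^3 - 6 * ∫ x in (0:ℝ)..t, gEE θ x *
        ∫ y in (0:ℝ)..(t - x), GEE θ y * (1 - GEE θ y) * gEE θ y =
      (3 / (4 * (1 + θ)^4)) * exp (-(3*t)) * θ^2 *
        (-2 - 8*θ - 9*θ^2 - 2*t^3*θ^2 - 4*t^2*θ*(1 + 2*θ)
          + 8 * exp t * (1 + θ) * (2 + t + 6*θ + 4*t*θ + t^2*θ)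
          - t*(2 + 10*θ + 13*θ^2)
          + exp (2*t) * (-14 - 56*θ - 39*θ^2 + t*(6 + 18*θ + 11*θ^2))) := by
  have hθ' : 1 + θ ≠ 0 := by positivity
  simp only [integral_GEE_mul_one_sub_mul_gEE θ hθ']
  rw [integral_gEE_mul_poly_SEE_sub, integral_gEE θ hθ', integral_gEE_mul_SEE_sub_sq,
    integral_gEE_mul_SEE_sub_cube, GEE_eq_one_sub_SEE]
  have h2 : exp (2 * t) = exp t ^ 2 := by rw [← Real.exp_nat_mul]; norm_num
  have h3 : exp (3 * t) = exp t ^ 3 := by rw [← Real.exp_nat_mul]; norm_num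
  simp only [SEE, eeConvPolySq, eeConvPolyCube, Real.exp_neg, h2, h3]
  field_simp
  ring

/-- The function `a(t,θ)` for the extended exponential alternative. -/
theorem stmt_14 (θ : ℝ) (hθ : 0 < θ) (t : ℝ) (ht : 0 ≤ t) :
    (GEE θ t)^3 - 6 * ∫ x in (0:ℝ)..t, gEE θ x *
        ∫ y in (0:ℝ)..(t - x), GEE θ y * (1 - GEE θ y) * gEE θ y =
      (3 / (4 * (1 + θ)^4)) * exp (-(3*t)) * θ^2 *
        (-2 - 8*θ - 9*θ^2 - 2*t^3*θ^2 - 4*t^2*θ*(1 + 2*θ)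
          + 8 * exp t * (1 + θ) * (2 + t + 6*θ + 4*t*θ + t^2*θ)
          - t*(2 + 10*θ + 13*θ^2)
          + exp (2*t) * (-14 - 56*θ - 39*θ^2 + t*(6 + 18*θ + 11*θ^2))) :=
  stmt_14_general θ hθ t
end
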